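/- arXiv:1302.0931 — 3 statements merged into one kernel-verified Lean document; each statement's English description precedes it below -/
import Mathlib

section
/- Let H be a subgroup of a group G, g ∈ G, and y ∈ ⟨H, H^g⟩. If the subgroups H^y and H^g are conjugate by an element of ⟨H^y, H^g⟩, then H and H^g are conjugate by an element of ⟨H, H^g⟩. -/
/-! Since `y ∈ ⟨H, H^g⟩`, the conjugate `H^y` lies in `⟨H, H^g⟩`, hence so does the whole of
`⟨H^y, H^g⟩`; if `z` conjugates `H^y` to `H^g` there, then `x = y z` conjugates `H` to `H^g`. -/

open Pointwise

/-- `conjSub H g` is the conjugate subgroup `H^g = g⁻¹Hg`. -/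
def conjSub {G : Type*} [Group G] (H : Subgroup G) (g : G) : Subgroup G :=
  MulAut.conj g⁻¹ • H

/-- `H` is pronormal: for every `g`, `H` and `H^g` are conjugate in `⟨H, H^g⟩`. -/
def IsPronormal {G : Type*} [Group G] (H : Subgroup G) : Prop :=
  ∀ g : G, ∃ x ∈ H ⊔ conjSub H g, conjSub H x = conjSub H g

section

variable {G : Type*} [Group G]

lemma conjSub_conjSub (H : Subgroup G) (a b : G) :
    conjSub (conjSub H a) b = conjSub H (a * b) := by
  rw [conjSub, conjSub, conjSub, smul_smul, ← map_mul, mul_inv_rev]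

lemma conjSub_le_of_le_of_mem {H K : Subgroup G} {y : G} (hHK : H ≤ K) (hy : y ∈ K) :
    conjSub H y ≤ K :=
  Subgroup.conj_smul_le_of_le hHK ⟨y⁻¹, K.inv_mem hy⟩

end

theorem stmt_0 {G : Type*} [Group G] (H : Subgroup G) (g y : G)
    (hy : y ∈ H ⊔ conjSub H g)
    (h : ∃ z ∈ conjSub H y ⊔ conjSub H g, conjSub (conjSub H y) z = conjSub H g) :
    ∃ x ∈ H ⊔ conjSub H g, conjSub H x = conjSub H g := by
  obtain ⟨z, hz, hconj⟩ := h
  have hle : conjSub H y ⊔ conjSub H g ≤ H ⊔ conjSub H g :=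
    sup_le (conjSub_le_of_le_of_mem le_sup_left hy) le_sup_right
  exact ⟨y * z, mul_mem hy (hle hz), by rw [← conjSub_conjSub, hconj]⟩
end

section
/- Hall subgroups of finite solvable groups are pronormal. -/
open Pointwise

/-! Hall subgroups of equal order in a finite solvable group `G` are conjugate, by induction on
`|G|`. Take an abelian normal `p`-subgroup `N ≠ 1`. The images of two Hall subgroups `A`, `B` in
`G/N` are conjugate, so after conjugating `A` we may assume `AN = BN`. A Hall subgroup meets the
`p`-group `N` either in `N` or trivially, and `A`, `B` behave alike since their intersections
with `N` both have order `gcd(|N|, |A|)`. In the first case `A = AN = BN = B`; in the second `A`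
and `B` are complements of `N` in `AN` of order coprime to `|N|`, hence conjugate by the abelian
case of Schur–Zassenhaus. Finally `H` and `H^g` are Hall subgroups of `⟨H, H^g⟩` of the same
order. -/

namespace Subgroup

variable {G : Type*} [Group G]

theorem map_conj_smul {G' : Type*} [Group G'] (f : G →* G') (g : G) (H : Subgroup G) :
    (MulAut.conj g • H).map f = MulAut.conj (f g) • H.map f := by
  ext x
  simp only [mem_map, mem_pointwise_smul_iff_inv_smul_mem, ← map_inv, MulAut.smul_def,
    MulAut.conj_apply]
  constructor
  · rintro ⟨y, hy, rfl⟩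
    exact ⟨_, hy, by simp [mul_assoc]⟩
  · rintro ⟨y, hy, hyx⟩
    exact ⟨g * y * g⁻¹, by simpa [mul_assoc] using hy, by simp [hyx, mul_assoc]⟩

theorem card_conj_smul (g : G) (H : Subgroup G) :
    Nat.card (MulAut.conj g • H : Subgroup G) = Nat.card H :=
  Nat.card_congr (equivSMul _ H).toEquiv.symm

theorem index_conj_smul (g : G) (H : Subgroup G) : (MulAut.conj g • H).index = H.index := by
  simpa using relIndex_pointwise_smul (MulAut.conj g) H ⊤

theorem card_subgroupOf_of_le {H K : Subgroup G} (h : H ≤ K) :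
    Nat.card (H.subgroupOf K) = Nat.card H :=
  Nat.card_congr (subgroupOfEquivOfLe h).toEquiv

theorem card_inf_mul_relIndex (H K : Subgroup G) :
    Nat.card (H ⊓ K : Subgroup G) * H.relIndex K = Nat.card K := by
  rw [← card_subgroupOf_of_le inf_le_right, inf_subgroupOf_right, relIndex, card_mul_index]

theorem conj_smul_eq_of_subgroupOf_eq {A B K : Subgroup G} (hA : A ≤ K) (hB : B ≤ K) {k : K}
    (h : MulAut.conj k • A.subgroupOf K = B.subgroupOf K) : MulAut.conj (k : G) • A = B := by
  rwa [conj_smul_subgroupOf hA, subgroupOf_inj, inf_of_le_left (conj_smul_le_of_le hA k),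
    inf_of_le_left hB] at h

theorem relIndex_sup_mul_card_inf [Finite G] (A N : Subgroup G) [N.Normal] :
    A.relIndex (A ⊔ N) * Nat.card (N ⊓ A : Subgroup G) = Nat.card N := by
  have hA := card_inf_mul_relIndex A (A ⊔ N)
  have hN := card_inf_mul_relIndex N (A ⊔ N)
  have hNA := card_inf_mul_relIndex N A
  rw [inf_of_le_left le_sup_left] at hA
  rw [inf_of_le_left le_sup_right, relIndex_sup_right] at hN
  have hpos : 0 < N.relIndex A := Nat.pos_of_ne_zero index_ne_zero_of_finite
  refine Nat.eq_of_mul_eq_mul_right hpos ?_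
  rw [mul_assoc, hNA, mul_comm, hA, hN]

theorem card_sup_of_inf_eq_bot [Finite G] {A N : Subgroup G} [N.Normal] (h : N ⊓ A = ⊥) :
    Nat.card (A ⊔ N : Subgroup G) = Nat.card A * Nat.card N := by
  rw [← card_inf_mul_relIndex A (A ⊔ N), inf_of_le_left le_sup_left,
    ← relIndex_sup_mul_card_inf A N, h, card_bot, mul_one]

theorem exists_normal_ne_bot_isMulCommutative [Group.IsSolvable G] [Nontrivial G] :
    ∃ A : Subgroup G, A.Normal ∧ A ≠ ⊥ ∧ IsMulCommutative A := by
  classical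
  have hsolv : ∃ n, derivedSeries G (n + 1) = ⊥ := by
    obtain ⟨n, hn⟩ := Group.IsSolvable.solvable (G := G)
    exact ⟨n, eq_bot_mono (derivedSeries_antitone G (Nat.le_succ n)) hn⟩
  set n := Nat.find hsolv
  refine ⟨derivedSeries G n, derivedSeries_normal G n, ?_, ?_⟩
  · rcases hn : n with _ | m
    · simp
    · exact Nat.find_min hsolv (m := m) (by omega)
  · rw [← commutator_self_eq_bot_iff, ← derivedSeries_succ]
    exact Nat.find_spec hsolv

theorem exists_normal_ne_bot_isMulCommutative_isPGroup [Finite G] [Group.IsSolvable G]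
    [Nontrivial G] : ∃ p, p.Prime ∧ ∃ N : Subgroup G,
      N.Normal ∧ N ≠ ⊥ ∧ IsMulCommutative N ∧ IsPGroup p N := by
  obtain ⟨A, hA, hAbot, hAcomm⟩ := exists_normal_ne_bot_isMulCommutative (G := G)
  have : Nontrivial A := (nontrivial_iff_ne_bot A).mpr hAbot
  set p := (Nat.card A).minFac
  have hp : p.Prime := Nat.minFac_prime Finite.one_lt_card.ne'
  have : Fact p.Prime := ⟨hp⟩
  obtain ⟨P⟩ : Nonempty (Sylow p A) := inferInstance
  have : (P : Subgroup A).Characteristic :=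
    P.characteristic_of_normal (normal_of_isMulCommutative _)
  refine ⟨p, hp, P.map A.subtype, inferInstance, ?_, inferInstance, P.isPGroup'.map _⟩
  rw [Ne, map_eq_bot_iff_of_injective _ A.subtype_injective]
  exact P.ne_bot_of_dvd_card (Nat.minFac_dvd _)

section SchurZassenhaus

open MulOpposite MulAction

variable [Finite G] {N H K : Subgroup G} [N.Normal] [IsMulCommutative N]

theorem IsComplement'.exists_eq_stabilizer (hN : Nat.Coprime (Nat.card N) N.index)
    (hH : N.IsComplement' H) : ∃ α : N.QuotientDiff, H = stabilizer G α := by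
  -- `H` fixes its own class, and the stabilizer is also a complement of `N`, so no larger.
  refine ⟨Quotient.mk'' ⟨H, hH.symm⟩, eq_of_le_of_card_ge (fun h hh => ?_) ?_⟩
  · change Quotient.mk'' (op h⁻¹ • (⟨H, hH.symm⟩ : N.LeftTransversal)) = _
    congr 1
    refine Subtype.ext ?_
    change op h⁻¹ • (H : Set G) = H
    exact op_smul_coe_set (inv_mem hh)
  · have hstab := isComplement'_stabilizer_of_coprime (α := Quotient.mk'' ⟨H, hH.symm⟩) hN
    exact (Nat.eq_of_mul_eq_mul_left Nat.card_pos
      (hstab.card_mul_card.trans hH.card_mul_card.symm)).le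

theorem exists_conj_smul_eq_of_isComplement' (hN : Nat.Coprime (Nat.card N) N.index)
    (hH : N.IsComplement' H) (hK : N.IsComplement' K) : ∃ g : G, MulAut.conj g • H = K := by
  obtain ⟨α, rfl⟩ := hH.exists_eq_stabilizer hN
  obtain ⟨β, rfl⟩ := hK.exists_eq_stabilizer hN
  obtain ⟨n, rfl⟩ := exists_smul_eq hN α β
  exact ⟨n, (stabilizer_smul_eq_stabilizer_map_conj (n : G) α).symm⟩

end SchurZassenhaus

theorem isComplement'_subgroupOf_sup [Finite G] {N X : Subgroup G} [N.Normal]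
    (hcop : Nat.Coprime (Nat.card N) (Nat.card X)) (hX : N ⊓ X = ⊥) :
    (N.subgroupOf (X ⊔ N)).IsComplement' (X.subgroupOf (X ⊔ N)) := by
  refine isComplement'_of_coprime ?_ ?_ <;>
    rw [card_subgroupOf_of_le le_sup_left, card_subgroupOf_of_le le_sup_right]
  · rw [card_sup_of_inf_eq_bot hX, mul_comm]
  · exact hcop

theorem exists_conj_smul_eq_of_sup_eq [Finite G] {N A B : Subgroup G} [N.Normal]
    [IsMulCommutative N] (hcop : Nat.Coprime (Nat.card N) (Nat.card A)) (hA : N ⊓ A = ⊥)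
    (hB : N ⊓ B = ⊥) (hAB : A ⊔ N = B ⊔ N) : ∃ g : G, MulAut.conj g • A = B := by
  have hcard : Nat.card A = Nat.card B := Nat.eq_of_mul_eq_mul_right Nat.card_pos
    ((card_sup_of_inf_eq_bot hA).symm.trans (hAB ▸ card_sup_of_inf_eq_bot hB))
  have hcompA := isComplement'_subgroupOf_sup hcop hA
  have hcompB := isComplement'_subgroupOf_sup (hcard ▸ hcop) hB
  rw [← hAB] at hcompB
  have hcopN : Nat.Coprime (Nat.card (N.subgroupOf (A ⊔ N))) (N.subgroupOf (A ⊔ N)).index := by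
    rwa [hcompA.symm.index_eq_card, card_subgroupOf_of_le le_sup_left,
      card_subgroupOf_of_le le_sup_right]
  obtain ⟨m, hm⟩ := exists_conj_smul_eq_of_isComplement' hcopN hcompA hcompB
  exact ⟨m, conj_smul_eq_of_subgroupOf_eq le_sup_left (hAB ▸ le_sup_left) hm⟩

theorem exists_conj_smul_sup_eq_of_map (N : Subgroup G) [N.Normal] {A B : Subgroup G}
    (h : ∃ q : G ⧸ N, MulAut.conj q • A.map (QuotientGroup.mk' N) = B.map (QuotientGroup.mk' N)) :
    ∃ g : G, MulAut.conj g • A ⊔ N = B ⊔ N := by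
  obtain ⟨q, hq⟩ := h
  obtain ⟨g, rfl⟩ := QuotientGroup.mk'_surjective N q
  refine ⟨g, ?_⟩
  have := congrArg (comap (QuotientGroup.mk' N)) hq
  rwa [← map_conj_smul, QuotientGroup.comap_map_mk', QuotientGroup.comap_map_mk', sup_comm,
    sup_comm N] at this

def IsHall (H : Subgroup G) : Prop :=
  Nat.Coprime (Nat.card H) H.index

namespace IsHall

variable {A B : Subgroup G}

theorem conj_smul (hA : A.IsHall) (g : G) : (MulAut.conj g • A).IsHall := by
  rwa [IsHall, card_conj_smul, index_conj_smul]

theorem subgroupOf (hA : A.IsHall) {K : Subgroup G} (hAK : A ≤ K) : (A.subgroupOf K).IsHall := by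
  rw [IsHall, card_subgroupOf_of_le hAK]
  exact hA.coprime_dvd_right (relIndex_dvd_index_of_le hAK)

theorem map {G' : Type*} [Group G'] (hA : A.IsHall) {f : G →* G'} (hf : Function.Surjective f) :
    (A.map f).IsHall :=
  (hA.coprime_dvd_left (card_map_dvd A f)).coprime_dvd_right (index_map_dvd A hf)

variable [Finite G]

theorem card_inf_normal (hA : A.IsHall) (N : Subgroup G) [N.Normal] :
    Nat.card (N ⊓ A : Subgroup G) = Nat.gcd (Nat.card N) (Nat.card A) := by
  have hcop : Nat.Coprime (A.relIndex (A ⊔ N)) (Nat.card A) :=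
    hA.symm.coprime_dvd_left (relIndex_dvd_index_of_le le_sup_left)
  rw [← relIndex_sup_mul_card_inf A N, hcop.gcd_mul_left_cancel,
    Nat.gcd_eq_left (card_dvd_of_le inf_le_right)]

theorem le_or_inf_eq_bot_of_isPGroup (hA : A.IsHall) {p : ℕ} [Fact p.Prime] {N : Subgroup G}
    [N.Normal] (hN : IsPGroup p N) : N ≤ A ∨ N ⊓ A = ⊥ := by
  rcases (hN.to_le (inf_le_left (b := A))).card_eq_or_dvd with h | hp
  · exact Or.inr (card_eq_one.mp h)
  refine Or.inl (le_sup_right.trans ((relIndex_eq_one (K := A ⊔ N)).mp ?_))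
  have hpA : ¬ p ∣ A.index := fun hpi => (Fact.out : p.Prime).one_lt.ne'
    (Nat.eq_one_of_dvd_coprimes hA (hp.trans (card_dvd_of_le inf_le_right)) hpi)
  obtain ⟨k, hk⟩ := hN.exists_card_eq
  have hcop : Nat.Coprime (A.relIndex (A ⊔ N)) (p ^ k) :=
    (Nat.Coprime.coprime_dvd_left (relIndex_dvd_index_of_le le_sup_left)
      ((Nat.Prime.coprime_iff_not_dvd Fact.out).mpr hpA).symm).pow_right k
  exact hcop.eq_one_of_dvd (hk ▸ Dvd.intro _ (relIndex_sup_mul_card_inf A N))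

theorem card_map_mk'_eq (hA : A.IsHall) (hB : B.IsHall) (hAB : Nat.card A = Nat.card B)
    (N : Subgroup G) [N.Normal] :
    Nat.card (A.map (QuotientGroup.mk' N)) = Nat.card (B.map (QuotientGroup.mk' N)) := by
  rw [← relIndex_ker, ← relIndex_ker, QuotientGroup.ker_mk']
  have hA' := card_inf_mul_relIndex N A
  have hB' := card_inf_mul_relIndex N B
  rw [hA.card_inf_normal, hAB] at hA'
  rw [hB.card_inf_normal] at hB'
  exact Nat.eq_of_mul_eq_mul_left (Nat.gcd_pos_of_pos_left _ Nat.card_pos) (hA'.trans hB'.symm)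

theorem exists_conj_smul_eq [Group.IsSolvable G] (hA : A.IsHall) (hB : B.IsHall) (hAB : Nat.card A = Nat.card B) :
    ∃ g : G, MulAut.conj g • A = B := by
  induction hn : Nat.card G using Nat.strong_induction_on generalizing G with
  | _ n ih =>
  rcases subsingleton_or_nontrivial G with hG | hG
  · exact ⟨1, Subsingleton.elim _ _⟩
  obtain ⟨p, hp, N, hN, hNbot, hNcomm, hNp⟩ :=
    exists_normal_ne_bot_isMulCommutative_isPGroup (G := G)
  have : Fact p.Prime := ⟨hp⟩
  have hquot : Nat.card (G ⧸ N) < n := by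
    have : Nontrivial N := (nontrivial_iff_ne_bot N).mpr hNbot
    rw [← hn, card_eq_card_quotient_mul_card_subgroup N]
    exact lt_mul_of_one_lt_right Nat.card_pos Finite.one_lt_card
  obtain ⟨g, hg⟩ := exists_conj_smul_sup_eq_of_map N (ih _ hquot
    (hA.map (QuotientGroup.mk'_surjective N)) (hB.map (QuotientGroup.mk'_surjective N))
    (hA.card_map_mk'_eq hB hAB N) rfl)
  have hA' := hA.conj_smul g
  have hinf : Nat.card (N ⊓ MulAut.conj g • A : Subgroup G) = Nat.card (N ⊓ B : Subgroup G) := by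
    rw [hA'.card_inf_normal, hB.card_inf_normal, card_conj_smul, hAB]
  rcases hA'.le_or_inf_eq_bot_of_isPGroup hNp with hNA | hNA
  · have hNB : N ≤ B := inf_eq_left.mp
      (eq_of_le_of_card_ge inf_le_left (by rw [← hinf, inf_of_le_left hNA]))
    exact ⟨g, by rw [← sup_of_le_left hNA, hg, sup_of_le_left hNB]⟩
  · have hNB : N ⊓ B = ⊥ := card_eq_one.mp (hinf ▸ card_eq_one.mpr hNA)
    have hcop : Nat.Coprime (Nat.card N) (Nat.card (MulAut.conj g • A : Subgroup G)) := by
      rw [Nat.Coprime, ← hA'.card_inf_normal, hNA, card_bot]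
    obtain ⟨h, hh⟩ := exists_conj_smul_eq_of_sup_eq hcop hNA hNB hg
    exact ⟨h * g, by rw [map_mul, mul_smul, hh]⟩

end IsHall

end Subgroup

open Subgroup in
theorem stmt_11 {G : Type*} [Group G] [Finite G] [Group.IsSolvable G] (H : Subgroup G)
    (hHall : Nat.Coprime (Nat.card H) H.index) :
    IsPronormal H := by
  intro g
  have hH : H ≤ H ⊔ conjSub H g := le_sup_left
  have hHg : conjSub H g ≤ H ⊔ conjSub H g := le_sup_right
  obtain ⟨k, hk⟩ := IsHall.exists_conj_smul_eq (IsHall.subgroupOf hHall hH)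
    ((IsHall.conj_smul hHall g⁻¹).subgroupOf hHg)
    (by rw [card_subgroupOf_of_le hH, card_subgroupOf_of_le (H := MulAut.conj g⁻¹ • H) hHg,
      card_conj_smul])
  refine ⟨(k : G)⁻¹, inv_mem k.2, ?_⟩
  rw [conjSub, inv_inv]
  exact conj_smul_eq_of_subgroupOf_eq hH hHg hk
end

section
/- Let G be a finite group, H a π-Hall subgroup of G containing a Sylow 2-subgroup S of G with 2 ∈ π, and suppose N_G(S) = S. Then H is pronormal in G. -/
/-!
If `H` contains the normalizer of a Sylow subgroup `P`, then for any `g` both `P` and `P^g` are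
Sylow subgroups of `K = ⟨H, H^g⟩`, so `P^g = P^k` for some `k ∈ K` by Sylow's theorem in `K`.
Then `k g⁻¹` normalizes `P`, hence lies in `H`, and `H^g = H^k`.
-/

open Pointwise

/-- `H` is a `π`-Hall subgroup: `|H|` is a `π`-number and its index a `π'`-number. -/
def IsPiHall {G : Type*} [Group G] (π : Set ℕ) (H : Subgroup G) : Prop :=
  (∀ p : ℕ, p.Prime → p ∣ Nat.card H → p ∈ π) ∧
  (∀ p : ℕ, p.Prime → p ∣ H.index → p ∉ π)

section ConjSub

variable {G : Type*} [Group G]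

theorem conjSub_mul (H : Subgroup G) (a b : G) :
    conjSub H (a * b) = conjSub (conjSub H a) b := by
  simp only [conjSub, mul_inv_rev, map_mul, mul_smul]

theorem conjSub_of_mem {H : Subgroup G} {h : G} (hh : h ∈ H) : conjSub H h = H :=
  Subgroup.conj_smul_eq_self_of_mem (inv_mem hh)

theorem conjSub_mono {H K : Subgroup G} (hHK : H ≤ K) (g : G) : conjSub H g ≤ conjSub K g :=
  Subgroup.pointwise_smul_le_pointwise_smul_iff.mpr hHK

end ConjSub

theorem Sylow.exists_mem_mul_inv_mem_normalizer {G : Type*} [Group G] [Finite G] {p : ℕ}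
    [Fact p.Prime] (P : Sylow p G) {K : Subgroup G} (g : G) (hP : (P : Subgroup G) ≤ K)
    (hPg : ((g⁻¹ • P : Sylow p G) : Subgroup G) ≤ K) :
    ∃ k ∈ K, k * g⁻¹ ∈ Subgroup.normalizer ((P : Subgroup G) : Set G) := by
  obtain ⟨k, hk⟩ := MulAction.exists_smul_eq K ((g⁻¹ • P).subtype hPg) (P.subtype hP)
  rw [Sylow.smul_subtype] at hk
  have hkP := Sylow.subtype_injective hk
  rw [Subgroup.smul_def, smul_smul] at hkP
  exact ⟨k, k.2, Sylow.smul_eq_iff_mem_normalizer.mp hkP⟩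

theorem isPronormal_of_normalizer_le {G : Type*} [Group G] [Finite G] {p : ℕ} [Fact p.Prime]
    (P : Sylow p G) {H : Subgroup G} (hPH : Subgroup.normalizer ((P : Subgroup G) : Set G) ≤ H) :
    IsPronormal H := by
  intro g
  have hP : (P : Subgroup G) ≤ H := Subgroup.le_normalizer.trans hPH
  have hPg : ((g⁻¹ • P : Sylow p G) : Subgroup G) ≤ H ⊔ conjSub H g := by
    rw [Sylow.coe_subgroup_smul]
    exact (conjSub_mono hP g).trans le_sup_right
  obtain ⟨k, hkK, hkN⟩ := P.exists_mem_mul_inv_mem_normalizer g (hP.trans le_sup_left) hPg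
  refine ⟨k, hkK, ?_⟩
  have hg : g = (k * g⁻¹)⁻¹ * k := by group
  rw [hg, conjSub_mul, conjSub_of_mem (inv_mem (hPH hkN))]

theorem stmt_12_general {G : Type*} [Group G] [Finite G]
    (H : Subgroup G) (S : Sylow 2 G)
    (hSH : (S : Subgroup G) ≤ H)
    (hself : Subgroup.normalizer ((S : Subgroup G) : Set G) = S) :
    IsPronormal H :=
  isPronormal_of_normalizer_le S (hself.le.trans hSH)

theorem stmt_12 {G : Type*} [Group G] [Finite G] (π : Set ℕ) (h2 : 2 ∈ π)
    (H : Subgroup G) (hHall : IsPiHall π H) (S : Sylow 2 G)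
    (hSH : (S : Subgroup G) ≤ H)
    (hself : Subgroup.normalizer ((S : Subgroup G) : Set G) = S) :
    IsPronormal H :=
  stmt_12_general H S hSH hself
end
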